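/- Let g : ℝ → ℝ be defined by g(x) = 4·(1 - 3x/(2π))/(1 + 3·cos x). Then for every x with 0 ≤ x < π/2, the derivative of g at x satisfies |g'(x)| ≤ 50. -/

import Mathlib

/-! By the quotient rule, `g'` is a numerator bounded by `(6/π)·4 + 12 ≤ 20` over
`(1 + 3 cos x)²`, and that denominator is at least `1` where `cos x ≥ 0`. -/

open Real

/-- `g(x) = 4·(1 - 3x/(2π))/(1 + 3·cos x)`. -/
noncomputable def g (x : ℝ) : ℝ :=
  4 * (1 - 3 * x / (2 * Real.pi)) / (1 + 3 * Real.cos x)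

theorem hasDerivAt_g {x : ℝ} (hx : 1 + 3 * cos x ≠ 0) :
    HasDerivAt g
      ((-(6 / π) * (1 + 3 * cos x) + 12 * (1 - 3 * x / (2 * π)) * sin x) /
        (1 + 3 * cos x) ^ 2) x := by
  have hnum : HasDerivAt (fun y : ℝ => 4 * (1 - 3 * y / (2 * π))) (-(6 / π)) x := by
    refine ((((hasDerivAt_id' x).const_mul 3).div_const (2 * π)).const_sub 1 |>.const_mul 4)
      |>.congr_deriv ?_
    field_simp
    ring
  have hden : HasDerivAt (fun y : ℝ => 1 + 3 * cos y) (-(3 * sin x)) x := by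
    simpa using ((hasDerivAt_cos x).const_mul 3).const_add 1
  exact (hnum.div hden hx).congr_deriv (by ring)

theorem abs_numerator_deriv_g_le {x : ℝ} (h0 : 0 ≤ x) (h1 : x ≤ 2 * π / 3) :
    |-(6 / π) * (1 + 3 * cos x) + 12 * (1 - 3 * x / (2 * π)) * sin x| ≤ 20 := by
  have h6 : 6 / π ≤ 2 := by
    rw [div_le_iff₀ pi_pos]
    linarith [pi_gt_three]
  have hu0 : 0 ≤ 1 - 3 * x / (2 * π) := by
    rw [sub_nonneg, div_le_one (by positivity)]
    linarith
  have hu1 : 1 - 3 * x / (2 * π) ≤ 1 := by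
    have : 0 ≤ 3 * x / (2 * π) := by positivity
    linarith
  have hcos : |1 + 3 * cos x| ≤ 4 := by
    rw [abs_le]
    constructor <;> linarith [neg_one_le_cos x, cos_le_one x]
  calc |-(6 / π) * (1 + 3 * cos x) + 12 * (1 - 3 * x / (2 * π)) * sin x|
      ≤ 6 / π * |1 + 3 * cos x| + 12 * (1 - 3 * x / (2 * π)) * |sin x| := by
        refine (abs_add_le _ _).trans_eq ?_
        rw [abs_mul, abs_mul, abs_mul, abs_neg, abs_of_pos (by positivity),
          abs_of_nonneg hu0, abs_of_pos (by norm_num : (0 : ℝ) < 12)]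
    _ ≤ 2 * 4 + 12 * 1 * 1 := by
        gcongr
        exact abs_sin_le_one x
    _ = 20 := by norm_num

/-- For `0 ≤ x < π/2`, `|g'(x)| ≤ 50`. -/
theorem stmt19 (x : ℝ) (h0 : 0 ≤ x) (h1 : x < Real.pi / 2) : |deriv g x| ≤ 50 := by
  have hcos : 0 < cos x := cos_pos_of_mem_Ioo ⟨by linarith [pi_pos], h1⟩
  have hden : 1 ≤ (1 + 3 * cos x) ^ 2 := by nlinarith
  rw [(hasDerivAt_g (by positivity)).deriv, abs_div,
    abs_of_pos (by positivity : (0 : ℝ) < (1 + 3 * cos x) ^ 2)]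
  calc _ ≤ |-(6 / π) * (1 + 3 * cos x) + 12 * (1 - 3 * x / (2 * π)) * sin x| :=
        div_le_self (abs_nonneg _) hden
    _ ≤ 20 := abs_numerator_deriv_g_le h0 (by linarith [pi_pos])
    _ ≤ 50 := by norm_num
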